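/- arXiv:2002.12688 — 3 statements merged into one kernel-verified Lean document; each statement's English description precedes it below -/
import Mathlib

section
/- Under the random-permutation data-partition model, the expectation over the permutation of the Frobenius norm of the conditional-expectation subgradient matrix is bounded as √M·||∂F||₂ ≤ E_π[ ||E_ξ[G]||_F ] ≤ √M·sqrt( ||∂F||₂² + σ²·(M−C)/(C(S−1)) ). -/
open Finset

noncomputable section

/-- Squared Frobenius norm of a real matrix. -/
def frobSq {n M : ℕ} (B : Matrix (Fin n) (Fin M) ℝ) : ℝ := ∑ i, ∑ j, B i j ^ 2

/-- Frobenius norm of a real matrix. -/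
def frobNorm {n M : ℕ} (B : Matrix (Fin n) (Fin M) ℝ) : ℝ := Real.sqrt (frobSq B)

/-- `ΔB := B (I - 𝟙𝟙ᵀ/M)`: subtract from every column the average of all columns. -/
def ctr {n M : ℕ} (B : Matrix (Fin n) (Fin M) ℝ) : Matrix (Fin n) (Fin M) ℝ :=
  Matrix.of fun i j => B i j - (∑ j', B i j') / M

open Classical in
/-- The valid ways to split the expanded dataset (each of the `S` points replicated `C`
times) across the `M` nodes: each point is placed at `C` distinct nodes and every node
receives exactly `L = C·S/M` points.  A uniform random permutation of the expanded dataset,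
constrained so that the `C` copies of a point go to `C` different nodes, induces the uniform
distribution on this set. -/
def allocs (S M C L : ℕ) : Finset (Fin S → Finset (Fin M)) :=
  Finset.univ.filter fun a =>
    (∀ s, (a s).card = C) ∧ ∀ j, (Finset.univ.filter fun s => j ∈ a s).card = L

open Classical in
/-- Given an allocation `a`, the ways each node `j` can draw a minibatch of size `B`
(uniformly, without replacement) from its local dataset `{s | j ∈ a s}`. -/
def batches {S M : ℕ} (a : Fin S → Finset (Fin M)) (B : ℕ) :
    Finset (Fin M → Finset (Fin S)) :=
  Finset.univ.filter fun ξ =>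
    ∀ j, ξ j ⊆ (Finset.univ.filter fun s => j ∈ a s) ∧ (ξ j).card = B

/-- The stochastic subgradient matrix: its `j`-th column is the average of the subgradients
over the minibatch `ξ j` drawn at node `j`. -/
def Gmat {n S M : ℕ} (g : Fin S → Fin n → ℝ) (B : ℕ)
    (ξ : Fin M → Finset (Fin S)) : Matrix (Fin n) (Fin M) ℝ :=
  Matrix.of fun i j => (∑ s ∈ ξ j, g s i) / B

/-- The entrywise conditional expectation `E_ξ[G]` of the stochastic subgradient matrix
given the allocation `a` (averaging uniformly over the minibatch draws). -/
def EGmat {n S M : ℕ} (g : Fin S → Fin n → ℝ) (B : ℕ)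
    (a : Fin S → Finset (Fin M)) : Matrix (Fin n) (Fin M) ℝ :=
  Matrix.of fun i j => (∑ ξ ∈ batches a B, Gmat g B ξ i j) / ((batches a B).card : ℝ)

/-!
Given the allocation, a uniformly drawn minibatch is an unbiased sample of the local dataset, so
column `j` of `E_ξ[G]` is the mean of the subgradients stored at node `j`. Every point lies on
`C` nodes, so the columns add up to `C S / L · ∂F = M ∂F`, and Cauchy–Schwarz gives the lower
bound for every single allocation.

For the upper bound, Jensen reduces the claim to the average of `‖E_ξ[G]‖_F²`. The set of
allocations is invariant under relabelling the data points, so each local dataset is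
distributed like a sample of `L` points drawn without replacement, whose mean has second moment
`‖∂F‖² + σ² (S - L) / (L (S - 1))`; finally `(S - L) / (L (S - 1)) = (M - C) / (C (S - 1))`
because `M L = C S`.
-/

section Sampling

variable {α ι κ R : Type*}

lemma sum_powersetCard_sum [DecidableEq α] [AddCommMonoid R] (u : Finset α) {k : ℕ}
    (hk : 1 ≤ k) (f : α → R) :
    ∑ b ∈ u.powersetCard k, ∑ s ∈ b, f s = (#u - 1).choose (k - 1) • ∑ s ∈ u, f s := by
  rw [Finset.sum_comm' (t' := u) (s' := fun s => {b ∈ u.powersetCard k | {s} ⊆ b})]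
  · rw [smul_sum]
    refine sum_congr rfl fun s hs => ?_
    rw [sum_const, card_filter_powersetCard_subset _ _ _ (by simpa) (by simpa), card_singleton]
  · intro b s
    simp only [mem_powersetCard, mem_filter, singleton_subset_iff]
    exact ⟨fun h => ⟨h, h.1.1 h.2⟩, fun h => h.1⟩

lemma sum_powersetCard_sum_div_card [DecidableEq α] [Field R] [CharZero R] (u : Finset α)
    {k : ℕ} (hk : 1 ≤ k) (hku : k ≤ #u) (f : α → R) :
    (∑ b ∈ u.powersetCard k, ∑ s ∈ b, f s) / #(u.powersetCard k) = k / #u * ∑ s ∈ u, f s := by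
  obtain ⟨m, rfl⟩ : ∃ m, k = m + 1 := ⟨k - 1, by omega⟩
  obtain ⟨l, hl⟩ : ∃ l, #u = l + 1 := ⟨#u - 1, by omega⟩
  have hchoose : ((l + 1 : ℕ) : R) * l.choose m = (l + 1).choose (m + 1) * (m + 1 : ℕ) := by
    exact_mod_cast Nat.add_one_mul_choose_eq l m
  have hpos : ((l + 1).choose (m + 1) : R) ≠ 0 := Nat.cast_ne_zero.2 (Nat.choose_pos (by omega)).ne'
  rw [sum_powersetCard_sum _ hk, card_powersetCard, hl, nsmul_eq_mul, div_eq_iff hpos]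
  simp only [Nat.add_sub_cancel]
  field_simp
  push_cast at hchoose ⊢
  linear_combination (∑ s ∈ u, f s) * hchoose

lemma sum_piFinset_apply_div_card [Fintype ι] [DecidableEq ι] [DecidableEq κ] [Field R]
    [CharZero R] (t : ι → Finset κ) (ht : ∀ i, (t i).Nonempty) (i : ι) (F : κ → R) :
    (∑ ξ ∈ Fintype.piFinset t, F (ξ i)) / #(Fintype.piFinset t) = (∑ b ∈ t i, F b) / #(t i) := by
  have hfibre : ∑ ξ ∈ Fintype.piFinset t, F (ξ i)
      = (∏ j ∈ univ.erase i, (#(t j) : R)) * ∑ b ∈ t i, F b := by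
    rw [← sum_fiberwise_of_maps_to (g := fun ξ => ξ i) (t := t i)
      (fun ξ hξ => Fintype.mem_piFinset.1 hξ i), mul_sum]
    refine sum_congr rfl fun b hb => ?_
    rw [sum_congr rfl fun ξ hξ => by rw [(mem_filter.1 hξ).2], sum_const,
      Fintype.card_filter_piFinset_eq_of_mem _ _ hb, nsmul_eq_mul]
    push_cast
    rfl
  have hcard : (#(Fintype.piFinset t) : R) = #(t i) * ∏ j ∈ univ.erase i, (#(t j) : R) := by
    rw [Fintype.card_piFinset, Nat.cast_prod, ← mul_prod_erase _ _ (mem_univ i)]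
  have hrest : ∏ j ∈ univ.erase i, (#(t j) : R) ≠ 0 :=
    prod_ne_zero_iff.2 fun j _ => Nat.cast_ne_zero.2 (ht j).card_pos.ne'
  rw [hfibre, hcard, mul_comm (#(t i) : R), mul_div_mul_left _ _ hrest]

lemma sum_sq_sub_div_card [Fintype ι] (v : ι → ℝ) :
    ∑ s, (v s - (∑ s, v s) / Fintype.card ι) ^ 2
      = ∑ s, v s ^ 2 - (∑ s, v s) ^ 2 / Fintype.card ι := by
  rcases isEmpty_or_nonempty ι with hι | hι
  · simp
  have hS : (Fintype.card ι : ℝ) ≠ 0 := Nat.cast_ne_zero.2 Fintype.card_ne_zero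
  simp only [sub_sq, sum_add_distrib, sum_sub_distrib, ← sum_mul, ← mul_sum, sum_const,
    card_univ, nsmul_eq_mul]
  field_simp
  ring

lemma sum_sqrt_div_card_le_sqrt (s : Finset ι) {f : ι → ℝ}
    (hf : ∀ i ∈ s, 0 ≤ f i) : (∑ i ∈ s, √(f i)) / #s ≤ √((∑ i ∈ s, f i) / #s) := by
  refine Real.le_sqrt_of_sq_le ?_
  calc ((∑ i ∈ s, √(f i)) / #s) ^ 2 ≤ (∑ i ∈ s, √(f i) ^ 2) / #s :=
        sum_div_card_sq_le_sum_sq_div_card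
    _ = (∑ i ∈ s, f i) / #s := by rw [sum_congr rfl fun i hi => Real.sq_sqrt (hf i hi)]

lemma card_filter_val_mod_eq {N L M : ℕ} (h : N = L * M) (j : Fin M) :
    #{t : Fin N | (t : ℕ) % M = j} = L := by
  rw [card_equiv ((finCongr h).trans finProdFinEquiv.symm) (t := univ ×ˢ {j}), card_product,
    card_singleton, card_univ, Fintype.card_fin, mul_one]
  intro t
  simp only [mem_filter, mem_univ, true_and, mem_product, mem_singleton, Equiv.trans_apply,
    finProdFinEquiv_symm_apply, Fin.ext_iff, Fin.coe_modNat, finCongr_apply, Fin.val_cast]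

end Sampling

section Exchangeable

variable {ι β : Type*} {A : Finset (ι → β)}

lemma exists_perm_apply_eq_apply_eq [DecidableEq ι] {s t s' t' : ι} (hst : s ≠ t)
    (hst' : s' ≠ t') : ∃ σ : Equiv.Perm ι, σ s = s' ∧ σ t = t' := by
  set τ := Equiv.swap s s'
  have hτt : τ t ≠ s' := fun h => hst (τ.injective ((Equiv.swap_apply_left s s').trans h.symm))
  refine ⟨τ.trans (Equiv.swap (τ t) t'), ?_, ?_⟩
  · rw [Equiv.trans_apply, Equiv.swap_apply_left, Equiv.swap_apply_of_ne_of_ne hτt.symm hst']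
  · rw [Equiv.trans_apply, Equiv.swap_apply_left]

lemma card_filter_comp_perm (hA : ∀ σ : Equiv.Perm ι, ∀ a ∈ A, a ∘ σ ∈ A)
    (σ : Equiv.Perm ι) (p : (ι → β) → Prop) [DecidablePred p] :
    #{a ∈ A | p (a ∘ σ)} = #{a ∈ A | p a} := by
  refine card_nbij' (· ∘ σ) (· ∘ σ.symm) ?_ ?_ ?_ ?_
  · intro a ha
    simp only [coe_filter] at ha ⊢
    exact ⟨hA σ a ha.1, ha.2⟩
  · intro a ha
    simp only [coe_filter] at ha ⊢
    refine ⟨hA σ.symm a ha.1, ?_⟩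
    simpa [Function.comp_assoc] using ha.2
  · intro a _
    simp [Function.comp_assoc]
  · intro a _
    simp [Function.comp_assoc]

variable [Fintype ι] [DecidableEq ι] (P : β → Prop) [DecidablePred P] {L : ℕ}

lemma card_mul_card_filter_apply (hA : ∀ σ : Equiv.Perm ι, ∀ a ∈ A, a ∘ σ ∈ A)
    (hL : ∀ a ∈ A, #{s | P (a s)} = L) (s : ι) :
    Fintype.card ι * #{a ∈ A | P (a s)} = #A * L := by
  have hconst : ∀ s', #{a ∈ A | P (a s')} = #{a ∈ A | P (a s)} := fun s' => by
    simpa using card_filter_comp_perm hA (Equiv.swap s s') fun a => P (a s)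
  calc Fintype.card ι * #{a ∈ A | P (a s)} = ∑ s', #{a ∈ A | P (a s')} := by
        simp [hconst]
    _ = ∑ a ∈ A, #{s | P (a s)} :=
        (sum_card_bipartiteAbove_eq_sum_card_bipartiteBelow fun (a : ι → β) s => P (a s)).symm
    _ = #A * L := by rw [sum_congr rfl hL, sum_const, smul_eq_mul]

lemma card_offDiag_mul_card_filter_apply (hA : ∀ σ : Equiv.Perm ι, ∀ a ∈ A, a ∘ σ ∈ A)
    (hL : ∀ a ∈ A, #{s | P (a s)} = L) {s t : ι} (hst : s ≠ t) :
    #(univ : Finset ι).offDiag * #{a ∈ A | P (a s) ∧ P (a t)} = #A * (L * L - L) := by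
  have hconst : ∀ p ∈ (univ : Finset ι).offDiag,
      #{a ∈ A | P (a p.1) ∧ P (a p.2)} = #{a ∈ A | P (a s) ∧ P (a t)} := fun p hp => by
    obtain ⟨σ, hσs, hσt⟩ := exists_perm_apply_eq_apply_eq hst (mem_offDiag.1 hp).2.2
    simpa [hσs, hσt] using card_filter_comp_perm hA σ fun a => P (a s) ∧ P (a t)
  calc #(univ : Finset ι).offDiag * #{a ∈ A | P (a s) ∧ P (a t)}
        = ∑ p ∈ (univ : Finset ι).offDiag, #{a ∈ A | P (a p.1) ∧ P (a p.2)} := by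
        rw [sum_congr rfl hconst, sum_const, smul_eq_mul]
    _ = ∑ a ∈ A, #{p ∈ (univ : Finset ι).offDiag | P (a p.1) ∧ P (a p.2)} :=
        (sum_card_bipartiteAbove_eq_sum_card_bipartiteBelow
          fun (a : ι → β) (p : ι × ι) => P (a p.1) ∧ P (a p.2)).symm
    _ = ∑ a ∈ A, #({s | P (a s)} : Finset ι).offDiag := by
        refine sum_congr rfl fun a _ => congrArg card ?_
        ext p
        simp only [mem_filter, mem_offDiag, mem_univ, true_and]
        tauto
    _ = #A * (L * L - L) := by
        rw [sum_congr rfl fun a ha => by rw [offDiag_card, hL a ha], sum_const, smul_eq_mul]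

lemma card_mul_card_filter_apply_and_apply (hA : ∀ σ : Equiv.Perm ι, ∀ a ∈ A, a ∘ σ ∈ A)
    (hL : ∀ a ∈ A, #{s | P (a s)} = L) (s t : ι) :
    (Fintype.card ι : ℝ) * (Fintype.card ι - 1) * #{a ∈ A | P (a s) ∧ P (a t)}
      = #A * L * (L - 1 + (Fintype.card ι - L) * if s = t then 1 else 0) := by
  rcases eq_or_ne s t with rfl | hst
  · have h : (Fintype.card ι : ℝ) * #{a ∈ A | P (a s)} = #A * L := by
      exact_mod_cast card_mul_card_filter_apply P hA hL s
    simp only [and_self, if_true]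
    linear_combination (Fintype.card ι - 1 : ℝ) * h
  · have h := card_offDiag_mul_card_filter_apply P hA hL hst
    rw [offDiag_card, card_univ] at h
    have h' := congrArg (Nat.cast : ℕ → ℝ) h
    push_cast [Nat.cast_sub (Nat.le_mul_self _)] at h'
    simp only [hst, if_false]
    linear_combination h'

lemma sum_sq_sum_filter_apply (hA : ∀ σ : Equiv.Perm ι, ∀ a ∈ A, a ∘ σ ∈ A)
    (hL : ∀ a ∈ A, #{s | P (a s)} = L) (v : ι → ℝ) :
    (Fintype.card ι : ℝ) * (Fintype.card ι - 1) * ∑ a ∈ A, (∑ s with P (a s), v s) ^ 2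
      = #A * L * ((Fintype.card ι - L) * ∑ s, v s ^ 2 + (L - 1) * (∑ s, v s) ^ 2) := by
  have hexpand : ∀ a : ι → β, (∑ s with P (a s), v s) ^ 2
      = ∑ s, ∑ t, if P (a s) ∧ P (a t) then v s * v t else 0 := fun a => by
    simp_rw [sq, sum_filter, sum_mul_sum, ite_zero_mul_ite_zero]
  calc _ = ∑ s, ∑ t, (Fintype.card ι : ℝ) * (Fintype.card ι - 1)
          * #{a ∈ A | P (a s) ∧ P (a t)} * (v s * v t) := by
        rw [sum_congr rfl fun a _ => hexpand a, sum_comm, mul_sum]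
        refine sum_congr rfl fun s _ => ?_
        rw [sum_comm, mul_sum]
        refine sum_congr rfl fun t _ => ?_
        rw [← sum_filter, sum_const, nsmul_eq_mul]
        ring
    _ = ∑ s, ∑ t, #A * L * (L - 1 + (Fintype.card ι - L) * if s = t then 1 else 0)
          * (v s * v t) := by
        simp_rw [card_mul_card_filter_apply_and_apply P hA hL]
    _ = _ := by
        simp only [mul_add, add_mul, sum_add_distrib, mul_ite, mul_one, mul_zero, ite_mul,
          zero_mul, sum_ite_eq, mem_univ, if_true, ← mul_sum, ← sum_mul, ← sq]
        ring

lemma sum_sq_mean_filter_apply (hA : ∀ σ : Equiv.Perm ι, ∀ a ∈ A, a ∘ σ ∈ A)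
    (hL : ∀ a ∈ A, #{s | P (a s)} = L) (hι : 2 ≤ Fintype.card ι) (hL1 : 1 ≤ L) (v : ι → ℝ) :
    ∑ a ∈ A, ((∑ s with P (a s), v s) / L) ^ 2
      = #A * (((∑ s, v s) / Fintype.card ι) ^ 2
        + (∑ s, (v s - (∑ s, v s) / Fintype.card ι) ^ 2) / Fintype.card ι
          * ((Fintype.card ι - L) / (L * (Fintype.card ι - 1)))) := by
  have hS : (2 : ℝ) ≤ Fintype.card ι := by exact_mod_cast hι
  have hL0 : (L : ℝ) ≠ 0 := Nat.cast_ne_zero.2 (by omega)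
  have hS1 : (Fintype.card ι : ℝ) - 1 ≠ 0 := by linarith
  have hmoment := sum_sq_sum_filter_apply P hA hL v
  simp only [div_pow, ← sum_div]
  rw [sum_sq_sub_div_card]
  field_simp
  linear_combination (Fintype.card ι : ℝ) * hmoment

end Exchangeable

def localData {S M : ℕ} (a : Fin S → Finset (Fin M)) (j : Fin M) : Finset (Fin S) :=
  {s | j ∈ a s}

lemma batches_eq_piFinset {S M : ℕ} (a : Fin S → Finset (Fin M)) (B : ℕ) :
    batches a B = Fintype.piFinset fun j => (localData a j).powersetCard B := by
  ext ξ
  simp [batches, localData, Fintype.mem_piFinset, mem_powersetCard]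

lemma EGmat_apply {n S M B L : ℕ} (g : Fin S → Fin n → ℝ) {a : Fin S → Finset (Fin M)}
    (ha : ∀ j, #(localData a j) = L) (hB : 1 ≤ B) (hBL : B ≤ L) (i : Fin n) (j : Fin M) :
    EGmat g B a i j = (∑ s ∈ localData a j, g s i) / L := by
  have hne : ∀ j, ((localData a j).powersetCard B).Nonempty := fun j =>
    powersetCard_nonempty.2 (by rw [ha j]; exact hBL)
  have hB0 : (B : ℝ) ≠ 0 := Nat.cast_ne_zero.2 (by omega)
  simp only [EGmat, Gmat, Matrix.of_apply, batches_eq_piFinset]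
  rw [sum_piFinset_apply_div_card _ hne j (fun b => (∑ s ∈ b, g s i) / B), ← sum_div, div_div,
    mul_comm, ← div_div, sum_powersetCard_sum_div_card _ hB (by rw [ha j]; exact hBL), ha j]
  field_simp

lemma sum_sum_localData {S M : ℕ} (a : Fin S → Finset (Fin M)) (f : Fin S → ℝ) :
    ∑ j, ∑ s ∈ localData a j, f s = ∑ s, #(a s) * f s := by
  simp only [localData, sum_filter]
  rw [sum_comm]
  refine sum_congr rfl fun s _ => ?_
  rw [← sum_filter, filter_mem_eq_inter, univ_inter, sum_const, nsmul_eq_mul]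

lemma comp_perm_mem_allocs {S M C L : ℕ} (σ : Equiv.Perm (Fin S))
    {a : Fin S → Finset (Fin M)} (ha : a ∈ allocs S M C L) : a ∘ σ ∈ allocs S M C L := by
  simp only [allocs, mem_filter, mem_univ, true_and, Function.comp_apply] at ha ⊢
  refine ⟨fun s => ha.1 (σ s), fun j => ?_⟩
  rw [← ha.2 j]
  exact card_equiv σ (by simp)

lemma card_localData {S M C L : ℕ} {a : Fin S → Finset (Fin M)} (ha : a ∈ allocs S M C L)
    (j : Fin M) : #(localData a j) = L := by
  simp only [allocs, mem_filter] at ha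
  exact ha.2.2 j

lemma allocs_nonempty {S M C L : ℕ} (hM : 0 < M) (hCM : C ≤ M) (hL : M * L = C * S) :
    (allocs S M C L).Nonempty := by
  -- Round robin: copy `k` of point `s` is copy number `k + C s` overall and goes to node
  -- `(k + C s) mod M`. The `C` copies of a point land on distinct nodes since `C ≤ M`, and node
  -- `j` receives the `L` copy numbers `≡ j (mod M)`.
  let e : Fin S × Fin C ≃ Fin (S * C) := finProdFinEquiv
  let node (t : Fin (S * C)) : Fin M := ⟨t % M, Nat.mod_lt _ hM⟩
  have hinj : ∀ s, Function.Injective fun k => node (e (s, k)) := fun s k₁ k₂ h => by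
    have h' : (k₁ + C * s) % M = (k₂ + C * s) % M := congrArg Fin.val h
    have hmod : (k₁ : ℕ) % M = k₂ % M := Nat.ModEq.add_right_cancel' _ h'
    rw [Nat.mod_eq_of_lt (k₁.2.trans_le hCM), Nat.mod_eq_of_lt (k₂.2.trans_le hCM)] at hmod
    exact Fin.ext hmod
  refine ⟨fun s => univ.image fun k => node (e (s, k)), ?_⟩
  simp only [allocs, mem_filter, mem_univ, true_and]
  refine ⟨fun s => by rw [card_image_of_injective _ (hinj s), card_univ, Fintype.card_fin],
    fun j => ?_⟩
  have himage : ({s | j ∈ univ.image fun k => node (e (s, k))} : Finset (Fin S))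
      = ({t | node t = j} : Finset (Fin (S * C))).image fun t => (e.symm t).1 := by
    ext s
    simp only [mem_filter, mem_univ, true_and, mem_image]
    constructor
    · rintro ⟨k, hk⟩
      exact ⟨e (s, k), hk, by simp⟩
    · rintro ⟨t, ht, rfl⟩
      exact ⟨(e.symm t).2, by simpa using ht⟩
  have hinjOn : Set.InjOn (fun t => (e.symm t).1) {t | node t = j} := by
    intro t₁ h₁ t₂ h₂ (h : (e.symm t₁).1 = (e.symm t₂).1)
    rw [← e.apply_symm_apply t₁, ← e.apply_symm_apply t₂]
    refine congrArg e (Prod.ext h (hinj (e.symm t₁).1 ?_))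
    change node (e ((e.symm t₁).1, (e.symm t₁).2)) = node (e ((e.symm t₁).1, (e.symm t₂).2))
    conv_rhs => rw [h]
    simp only [Prod.mk.eta, Equiv.apply_symm_apply]
    exact h₁.trans h₂.symm
  rw [himage, card_image_of_injOn (by simpa using hinjOn)]
  simpa [node, Fin.ext_iff] using card_filter_val_mod_eq (by rw [mul_comm S, ← hL, mul_comm]) j

lemma sum_frobSq_EGmat {n S M C B L : ℕ} (hC : 1 ≤ C) (hS : 2 ≤ S) (hL : M * L = C * S)
    (hB : 1 ≤ B) (hBL : B ≤ L) (g : Fin S → Fin n → ℝ) :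
    ∑ a ∈ allocs S M C L, frobSq (EGmat g B a)
      = #(allocs S M C L) * (M * (∑ i, ((∑ s, g s i) / S) ^ 2
        + (∑ i, (∑ s, (g s i - (∑ s, g s i) / S) ^ 2) / S) * ((M - C) / (C * (S - 1))))) := by
  have hrate : ((M : ℝ) - C) / (C * (S - 1)) = (S - L) / (L * (S - 1)) := by
    have hMLCS : (M : ℝ) * L = C * S := by exact_mod_cast hL
    have hS1 : (S : ℝ) - 1 ≠ 0 := by
      have : (2 : ℝ) ≤ S := by exact_mod_cast hS
      linarith
    have hC0 : (C : ℝ) ≠ 0 := Nat.cast_ne_zero.2 (by omega)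
    have hL0 : (L : ℝ) ≠ 0 := Nat.cast_ne_zero.2 (by omega)
    rw [div_eq_div_iff (mul_ne_zero hC0 hS1) (mul_ne_zero hL0 hS1)]
    linear_combination ((S : ℝ) - 1) * hMLCS
  have hA : ∀ σ : Equiv.Perm (Fin S), ∀ a ∈ allocs S M C L, a ∘ σ ∈ allocs S M C L :=
    fun σ _ ha => comp_perm_mem_allocs σ ha
  have hmean : ∀ i j, ∑ a ∈ allocs S M C L, ((∑ s ∈ localData a j, g s i) / L) ^ 2
      = #(allocs S M C L) * (((∑ s, g s i) / S) ^ 2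
        + (∑ s, (g s i - (∑ s, g s i) / S) ^ 2) / S * ((S - L) / (L * (S - 1)))) := by
    intro i j
    simpa [localData] using sum_sq_mean_filter_apply (fun x => j ∈ x) hA
      (fun a ha => card_localData ha j) (by simpa using hS) (hB.trans hBL) fun s => g s i
  calc ∑ a ∈ allocs S M C L, frobSq (EGmat g B a)
      = ∑ i, ∑ j : Fin M, ∑ a ∈ allocs S M C L, ((∑ s ∈ localData a j, g s i) / L) ^ 2 := by
        simp only [frobSq]
        rw [sum_comm]
        refine sum_congr rfl fun i _ => ?_
        rw [sum_comm]
        refine sum_congr rfl fun j _ => sum_congr rfl fun a ha => ?_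
        rw [EGmat_apply g (card_localData ha) hB hBL]
    _ = _ := by
        simp only [hmean, hrate, sum_const, card_univ, Fintype.card_fin, nsmul_eq_mul,
          ← mul_sum, sum_add_distrib, ← sum_mul]
        ring

lemma card_mul_sum_sq_le_frobSq_EGmat {n S M C B L : ℕ} (hM : 0 < M) (hS : 0 < S)
    (hL : M * L = C * S) (hB : 1 ≤ B) (hBL : B ≤ L) (g : Fin S → Fin n → ℝ)
    {a : Fin S → Finset (Fin M)} (ha : a ∈ allocs S M C L) :
    M * ∑ i, ((∑ s, g s i) / S) ^ 2 ≤ frobSq (EGmat g B a) := by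
  have hC : ∀ s, #(a s) = C := by
    simp only [allocs, mem_filter] at ha
    exact ha.2.1
  have hMLCS : (M : ℝ) * L = C * S := by exact_mod_cast hL
  have hL0 : (L : ℝ) ≠ 0 := Nat.cast_ne_zero.2 (by omega)
  have hM0 : (0 : ℝ) < M := Nat.cast_pos.2 hM
  rw [frobSq, mul_sum]
  refine sum_le_sum fun i _ => ?_
  have hcolumn : ∑ j, EGmat g B a i j = M * ((∑ s, g s i) / S) := by
    simp only [EGmat_apply g (card_localData ha) hB hBL, ← sum_div, sum_sum_localData, hC,
      ← mul_sum]
    field_simp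
    linear_combination -(∑ s, g s i) * hMLCS
  have hcs := sq_sum_le_card_mul_sum_sq (s := univ) (f := fun j => EGmat g B a i j)
  rw [hcolumn, card_univ, Fintype.card_fin] at hcs
  nlinarith

/-- **Proposition 2, third claim.** Under the random-permutation data-partition model,
`√M ‖∂F‖₂ ≤ E_π[‖E_ξ[G]‖_F] ≤ √M √(‖∂F‖₂² + σ² (M-C)/(C(S-1)))`. -/
theorem statement5
    -- dataset of `S` points, `M` nodes, replication factor `C`, local dataset size
    -- `L = C·S/M`, and minibatch size `B`
    (n S M C B L : ℕ) (hM : 0 < M) (hC1 : 1 ≤ C) (hCM : C ≤ M) (hS : 2 ≤ S)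
    (hL : M * L = C * S) (hB1 : 1 ≤ B) (hBL : B ≤ L)
    -- the subgradients of the loss at the fixed parameter vector `w`, at each data point
    (g : Fin S → Fin n → ℝ)
    -- the full-dataset average subgradient `∂F` and the total variance `σ²`
    (gradF : Fin n → ℝ) (hgradF : gradF = fun i => (∑ s, g s i) / S)
    (sigma2 : ℝ) (hsigma2 : sigma2 = ∑ i, (∑ s, (g s i - gradF i) ^ 2) / S)
 :
    Real.sqrt M * Real.sqrt (∑ i, gradF i ^ 2) ≤
      (∑ a ∈ allocs S M C L, frobNorm (EGmat g B a)) / ((allocs S M C L).card : ℝ) ∧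
    (∑ a ∈ allocs S M C L, frobNorm (EGmat g B a)) / ((allocs S M C L).card : ℝ) ≤
      Real.sqrt M * Real.sqrt ((∑ i, gradF i ^ 2)
        + sigma2 * (((M : ℝ) - C) / ((C : ℝ) * ((S : ℝ) - 1)))) := by
  have hA : (allocs S M C L).Nonempty := allocs_nonempty hM hCM hL
  have hN : (0 : ℝ) < #(allocs S M C L) := Nat.cast_pos.2 hA.card_pos
  subst hgradF hsigma2
  constructor
  · rw [le_div_iff₀ hN]
    calc √M * √(∑ i, ((∑ s, g s i) / S) ^ 2) * #(allocs S M C L)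
        = ∑ _a ∈ allocs S M C L, √(M * ∑ i, ((∑ s, g s i) / S) ^ 2) := by
          rw [sum_const, nsmul_eq_mul, Real.sqrt_mul (Nat.cast_nonneg M)]
          ring
      _ ≤ ∑ a ∈ allocs S M C L, frobNorm (EGmat g B a) :=
          sum_le_sum fun a ha => Real.sqrt_le_sqrt
            (card_mul_sum_sq_le_frobSq_EGmat hM (by omega) hL hB1 hBL g ha)
  · calc (∑ a ∈ allocs S M C L, frobNorm (EGmat g B a)) / #(allocs S M C L)
        ≤ √((∑ a ∈ allocs S M C L, frobSq (EGmat g B a)) / #(allocs S M C L)) :=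
          sum_sqrt_div_card_le_sqrt _ fun a _ => by unfold frobSq; positivity
      _ = _ := by
          rw [sum_frobSq_EGmat hC1 hS hL hB1 hBL, mul_div_cancel_left₀ _ hN.ne',
            Real.sqrt_mul (Nat.cast_nonneg M)]

end
end

section
/- Under assumptions A1–A5 with constant learning rate η > 0, assuming that at every iterate (both at w_j(k) and at w̄(k)) the matrix of expected stochastic subgradients of the functions F_j has Frobenius norm at most H, the average iterate w̄(k) := (1/M)Σ_j w_j(k) satisfies, for every k ≥ 0: E[dist(w̄(k+1), W*)²] ≤ E[dist(w̄(k), W*)²] + η²E/M + (4ηH/M)·||ΔW(k)||_F − (2η/M)·( E[F(w̄(k))] − F* ). -/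
/-!
Because the rows of `A` sum to one, averaging the update over the workers gives
`w̄(k+1) = w̄(k) - η ḡ`, where `ḡ` is the column average of `G(k)`. For `p ∈ W*`, expanding
`‖w̄ - η ḡ - p‖²` gives a noise term `η² ‖ḡ‖² ≤ η² ‖G‖²_F / M` (Jensen) and a cross term with
expectation `-2η ⟪colAvg EG, w̄ - p⟫`. For each worker, chaining the subgradient inequality at `w̄`
(with `EGt`) and at `wⱼ` (with `EG`) and summing shows that `M ⟪colAvg EG, w̄ - p⟫` is at least
`F(w̄) - F* - ⟪EG - EGt, ΔW⟫_F`, and Frobenius Cauchy–Schwarz bounds the last pairing by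
`2H ‖ΔW‖_F`. As the bound holds for every `p ∈ W*`, it holds for the distance to `W*`.
-/

open MeasureTheory Matrix Finset

noncomputable section

/-- Squared Frobenius norm of a complex matrix. -/
def frobSqC {n M : ℕ} (B : Matrix (Fin n) (Fin M) ℂ) : ℝ := ∑ i, ∑ j, ‖B i j‖ ^ 2

/-- The `j`-th column of a matrix, viewed as a vector of `EuclideanSpace ℝ (Fin n)`. -/
def col {n M : ℕ} (B : Matrix (Fin n) (Fin M) ℝ) (j : Fin M) : EuclideanSpace ℝ (Fin n) :=
  WithLp.toLp 2 (fun i => B i j)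

/-- The average of the columns of `B` (the average model `w̄`). -/
def colAvg {n M : ℕ} (B : Matrix (Fin n) (Fin M) ℝ) : EuclideanSpace ℝ (Fin n) :=
  WithLp.toLp 2 (fun i => (∑ j, B i j) / M)

/-- Time average of a sequence of vectors over iterations `0, …, K-1`. -/
def timeAvg {n : ℕ} (K : ℕ) (v : ℕ → EuclideanSpace ℝ (Fin n)) : EuclideanSpace ℝ (Fin n) :=
  WithLp.toLp 2 (fun i => (∑ k ∈ Finset.range K, v k i) / K)

/-- `g` is a subgradient of `f` at `x`. -/
def IsSubgradAt {n : ℕ} (f : EuclideanSpace ℝ (Fin n) → ℝ)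
    (g x : EuclideanSpace ℝ (Fin n)) : Prop :=
  ∀ y, f x + (inner ℝ g (y - x) : ℝ) ≤ f y

lemma le_sq_infDist_add {X : Type*} [PseudoMetricSpace X] {s : Set X} {x : X} {a c : ℝ}
    (hs : s.Nonempty) (h : ∀ p ∈ s, a ≤ dist x p ^ 2 + c) :
    a ≤ Metric.infDist x s ^ 2 + c := by
  have hsqrt : √(a - c) ≤ Metric.infDist x s :=
    (Metric.le_infDist hs).2 fun p hp =>
      Real.sqrt_le_iff.2 ⟨dist_nonneg, by linarith [h p hp]⟩
  linarith [(Real.sqrt_le_iff.1 hsqrt).2]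

namespace IsSubgradAt

variable {n : ℕ} {f : EuclideanSpace ℝ (Fin n) → ℝ} {g h x y : EuclideanSpace ℝ (Fin n)}

lemma sub_le_inner (hg : IsSubgradAt f g x) (hh : IsSubgradAt f h y)
    (p : EuclideanSpace ℝ (Fin n)) :
    f y - f p ≤ inner ℝ g (y - p) + inner ℝ (g - h) (x - y) := by
  have hinner : inner ℝ g (y - p) + inner ℝ (g - h) (x - y) =
      -inner ℝ g (p - x) - inner ℝ h (x - y) := by
    simp only [inner_sub_left, inner_sub_right]; ring
  linarith [hg p, hh x]

end IsSubgradAt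

section Columns

variable {n M : ℕ}

lemma col_ctr (B : Matrix (Fin n) (Fin M) ℝ) (j : Fin M) :
    _root_.col (ctr B) j = _root_.col B j - colAvg B :=
  rfl

lemma colAvg_eq_inv_smul_sum_col (B : Matrix (Fin n) (Fin M) ℝ) :
    colAvg B = (M : ℝ)⁻¹ • ∑ j, _root_.col B j := by
  ext i
  simp [colAvg, _root_.col, div_eq_inv_mul]

lemma colAvg_mul_of_sum_row_eq_one (B : Matrix (Fin n) (Fin M) ℝ) {A : Matrix (Fin M) (Fin M) ℝ}
    (hA : ∀ i, ∑ j, A i j = 1) : colAvg (B * A) = colAvg B := by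
  ext i
  simp only [colAvg, PiLp.toLp_apply, Matrix.mul_apply]
  rw [Finset.sum_comm]
  simp [← Finset.mul_sum, hA]

lemma colAvg_sub_smul (B C : Matrix (Fin n) (Fin M) ℝ) (c : ℝ) :
    colAvg (B - c • C) = colAvg B - c • colAvg C := by
  ext i
  simp only [colAvg, Matrix.sub_apply, Matrix.smul_apply, smul_eq_mul, Finset.sum_sub_distrib,
    ← Finset.mul_sum, PiLp.sub_apply, PiLp.smul_apply]
  ring

lemma frobSq_eq_sum_norm_col_sq (B : Matrix (Fin n) (Fin M) ℝ) :
    frobSq B = ∑ j, ‖_root_.col B j‖ ^ 2 := by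
  simp [frobSq, _root_.col, EuclideanSpace.norm_sq_eq, Finset.sum_comm (γ := Fin n)]

lemma abs_sum_inner_col_le (B C : Matrix (Fin n) (Fin M) ℝ) :
    |∑ j, inner ℝ (_root_.col B j) (_root_.col C j)| ≤ frobNorm B * frobNorm C := by
  calc |∑ j, inner ℝ (_root_.col B j) (_root_.col C j)|
      ≤ ∑ j, ‖_root_.col B j‖ * ‖_root_.col C j‖ :=
        (Finset.abs_sum_le_sum_abs _ _).trans
          (Finset.sum_le_sum fun j _ => abs_real_inner_le_norm _ _)
    _ ≤ √(∑ j, ‖_root_.col B j‖ ^ 2) * √(∑ j, ‖_root_.col C j‖ ^ 2) :=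
        Real.sum_mul_le_sqrt_mul_sqrt _ _ _
    _ = frobNorm B * frobNorm C := by
        rw [frobNorm, frobNorm, frobSq_eq_sum_norm_col_sq, frobSq_eq_sum_norm_col_sq]

lemma sq_norm_colAvg_le (B : Matrix (Fin n) (Fin M) ℝ) : ‖colAvg B‖ ^ 2 ≤ frobSq B / M := by
  have hnorm : ‖colAvg B‖ ≤ (∑ j, ‖_root_.col B j‖) / M := by
    rw [colAvg_eq_inv_smul_sum_col, norm_smul, norm_inv, RCLike.norm_natCast, inv_mul_eq_div]
    gcongr
    exact norm_sum_le _ _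
  calc ‖colAvg B‖ ^ 2 ≤ ((∑ j, ‖_root_.col B j‖) / M) ^ 2 := by gcongr
    _ ≤ (∑ j, ‖_root_.col B j‖ ^ 2) / M := by
      simpa using sum_div_card_sq_le_sum_sq_div_card (s := Finset.univ)
        (f := fun j => ‖_root_.col B j‖)
    _ = frobSq B / M := by rw [frobSq_eq_sum_norm_col_sq]

lemma sum_inner_col_eq_mul_inner_colAvg (B : Matrix (Fin n) (Fin M) ℝ) (v : EuclideanSpace ℝ (Fin n)) :
    ∑ j, inner ℝ (_root_.col B j) v = M * inner ℝ (colAvg B) v := by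
  rcases Nat.eq_zero_or_pos M with rfl | hM
  · simp
  rw [colAvg_eq_inv_smul_sum_col, real_inner_smul_left, sum_inner]
  field_simp

lemma inner_colAvg_eq_sum (B : Matrix (Fin n) (Fin M) ℝ) (v : EuclideanSpace ℝ (Fin n)) :
    inner ℝ (colAvg B) v = ∑ i, ∑ j, B i j * (v i / M) := by
  refine Finset.sum_congr rfl fun i _ => ?_
  simp only [colAvg, RCLike.inner_apply, conj_trivial, PiLp.toLp_apply, Finset.sum_div,
    Finset.mul_sum]
  exact Finset.sum_congr rfl fun j _ => by ring

end Columns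

section Workers

variable {n M : ℕ}

lemma sum_sub_le_mul_inner_colAvg {Fj : Fin M → EuclideanSpace ℝ (Fin n) → ℝ}
    {W EG EGt : Matrix (Fin n) (Fin M) ℝ} {H : ℝ}
    (hsub : ∀ j, IsSubgradAt (Fj j) (_root_.col EG j) (_root_.col W j))
    (hsubt : ∀ j, IsSubgradAt (Fj j) (_root_.col EGt j) (colAvg W))
    (hH : frobNorm EG ≤ H) (hHt : frobNorm EGt ≤ H) (p : EuclideanSpace ℝ (Fin n)) :
    ∑ j, Fj j (colAvg W) - ∑ j, Fj j p - 2 * H * frobNorm (ctr W) ≤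
      M * inner ℝ (colAvg EG) (colAvg W - p) := by
  have hsum : ∑ j, Fj j (colAvg W) - ∑ j, Fj j p ≤
      M * inner ℝ (colAvg EG) (colAvg W - p) +
        (∑ j, inner ℝ (_root_.col EG j) (_root_.col (ctr W) j)
          - ∑ j, inner ℝ (_root_.col EGt j) (_root_.col (ctr W) j)) := by
    rw [← Finset.sum_sub_distrib, ← sum_inner_col_eq_mul_inner_colAvg, ← Finset.sum_sub_distrib,
      ← Finset.sum_add_distrib]
    refine Finset.sum_le_sum fun j _ => ?_
    rw [col_ctr, ← inner_sub_left]
    exact (hsub j).sub_le_inner (hsubt j) p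
  have hΔ : 0 ≤ frobNorm (ctr W) := Real.sqrt_nonneg _
  have hEG := (abs_le.1 ((abs_sum_inner_col_le EG (ctr W)).trans
    (mul_le_mul_of_nonneg_right hH hΔ))).2
  have hEGt := (abs_le.1 ((abs_sum_inner_col_le EGt (ctr W)).trans
    (mul_le_mul_of_nonneg_right hHt hΔ))).1
  linarith

end Workers

section Expectation

variable {n M : ℕ} {Ω : Type*} [MeasurableSpace Ω] {μ : Measure Ω}
  {G : Ω → Matrix (Fin n) (Fin M) ℝ}

lemma integrable_inner_colAvg (hG : ∀ i j, Integrable (fun ω => G ω i j) μ)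
    (v : EuclideanSpace ℝ (Fin n)) : Integrable (fun ω => inner ℝ (colAvg (G ω)) v) μ := by
  simp_rw [inner_colAvg_eq_sum]
  exact integrable_finsetSum _ fun i _ =>
    integrable_finsetSum _ fun j _ => (hG i j).mul_const _

lemma integral_inner_colAvg {EG : Matrix (Fin n) (Fin M) ℝ}
    (hG : ∀ i j, Integrable (fun ω => G ω i j) μ) (hEG : ∀ i j, EG i j = ∫ ω, G ω i j ∂μ)
    (v : EuclideanSpace ℝ (Fin n)) :
    ∫ ω, inner ℝ (colAvg (G ω)) v ∂μ = inner ℝ (colAvg EG) v := by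
  simp_rw [inner_colAvg_eq_sum, hEG]
  rw [integral_finsetSum _ fun i _ => integrable_finsetSum _ fun j _ => (hG i j).mul_const _]
  refine Finset.sum_congr rfl fun i _ => ?_
  rw [integral_finsetSum _ fun j _ => (hG i j).mul_const _]
  simp only [integral_mul_const]

lemma sq_infDist_sub_smul_colAvg_le {s : Set (EuclideanSpace ℝ (Fin n))}
    {x p : EuclideanSpace ℝ (Fin n)} (hp : p ∈ s) (η : ℝ) (B : Matrix (Fin n) (Fin M) ℝ) :
    Metric.infDist (x - η • colAvg B) s ^ 2 ≤
      dist x p ^ 2 - 2 * η * inner ℝ (colAvg B) (x - p) + η ^ 2 / M * frobSq B := by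
  have hdist : dist (x - η • colAvg B) p ^ 2 =
      dist x p ^ 2 - 2 * η * inner ℝ (colAvg B) (x - p) + η ^ 2 * ‖colAvg B‖ ^ 2 := by
    rw [dist_eq_norm, dist_eq_norm, sub_right_comm, norm_sub_sq_real, real_inner_smul_right,
      norm_smul, mul_pow, Real.norm_eq_abs, sq_abs, real_inner_comm]
    ring
  have hnorm : η ^ 2 * ‖colAvg B‖ ^ 2 ≤ η ^ 2 / M * frobSq B :=
    calc η ^ 2 * ‖colAvg B‖ ^ 2 ≤ η ^ 2 * (frobSq B / M) := by gcongr; exact sq_norm_colAvg_le B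
      _ = η ^ 2 / M * frobSq B := by ring
  calc Metric.infDist (x - η • colAvg B) s ^ 2 ≤ dist (x - η • colAvg B) p ^ 2 := by
        gcongr
        · exact Metric.infDist_nonneg
        · exact Metric.infDist_le_dist_of_mem hp
    _ ≤ _ := by rw [hdist]; linarith

variable [IsProbabilityMeasure μ]

lemma integral_sq_infDist_sub_smul_colAvg_le {s : Set (EuclideanSpace ℝ (Fin n))}
    {x p : EuclideanSpace ℝ (Fin n)} (hp : p ∈ s) (η : ℝ) {EG : Matrix (Fin n) (Fin M) ℝ}
    (hG : ∀ i j, Integrable (fun ω => G ω i j) μ) (hEG : ∀ i j, EG i j = ∫ ω, G ω i j ∂μ)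
    (hGsq : Integrable (fun ω => frobSq (G ω)) μ)
    (hint : Integrable (fun ω => Metric.infDist (x - η • colAvg (G ω)) s ^ 2) μ) :
    ∫ ω, Metric.infDist (x - η • colAvg (G ω)) s ^ 2 ∂μ ≤
      dist x p ^ 2 - 2 * η * inner ℝ (colAvg EG) (x - p) +
        η ^ 2 / M * ∫ ω, frobSq (G ω) ∂μ := by
  have hinner := (integrable_inner_colAvg hG (x - p)).const_mul (2 * η)
  have hlin : Integrable (fun ω => dist x p ^ 2 - 2 * η * inner ℝ (colAvg (G ω)) (x - p)) μ :=
    (integrable_const _).sub hinner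
  calc ∫ ω, Metric.infDist (x - η • colAvg (G ω)) s ^ 2 ∂μ
      ≤ ∫ ω, (dist x p ^ 2 - 2 * η * inner ℝ (colAvg (G ω)) (x - p) +
          η ^ 2 / M * frobSq (G ω)) ∂μ :=
        integral_mono hint (hlin.add (hGsq.const_mul _))
          fun ω => sq_infDist_sub_smul_colAvg_le hp η (G ω)
    _ = _ := by
      rw [integral_add hlin (hGsq.const_mul _),
        integral_sub (integrable_const _) hinner, integral_const_mul, integral_const_mul,
        integral_inner_colAvg hG hEG, integral_const, probReal_univ, one_smul]

end Expectation

theorem statement11_general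
    (n M : ℕ) (hM : 0 < M)
    (A : Matrix (Fin M) (Fin M) ℝ)
    (hrows : ∀ i, ∑ j, A i j = 1)
    -- the local objective functions (A1), the global objective `F` and its
    -- nonempty set of global minimizers (A2), with minimum value `F*`
    (Fj : Fin M → EuclideanSpace ℝ (Fin n) → ℝ)
    (F : EuclideanSpace ℝ (Fin n) → ℝ) (hFdef : F = fun w => ∑ j, Fj j w)
    (Wstar : Set (EuclideanSpace ℝ (Fin n)))
    (hWne : Wstar.Nonempty)
    (Fstar : ℝ) (hFstar : ∀ w ∈ Wstar, F w = Fstar)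
    -- probability space carrying the minibatch randomness of the current iteration
    {Ω : Type*} [m0 : MeasurableSpace Ω] (μ : Measure Ω) [IsProbabilityMeasure μ]
    -- current estimates `W = W(k)`, the random stochastic subgradient matrix `G = G(k)`,
    (W : Matrix (Fin n) (Fin M) ℝ)
    (G : Ω → Matrix (Fin n) (Fin M) ℝ)
    (hGint : ∀ i j, Integrable (fun ω => G ω i j) μ)
    -- the expected stochastic subgradient matrices
    (EG EGt : Matrix (Fin n) (Fin M) ℝ)
    (hEG : ∀ i j, EG i j = ∫ ω, G ω i j ∂μ)
    -- unbiasedness: the expected columns are subgradients at `wⱼ(k)` resp. at `w̄(k)`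
    (hsub : ∀ j, IsSubgradAt (Fj j) (col EG j) (col W j))
    (hsubt : ∀ j, IsSubgradAt (Fj j) (col EGt j) (colAvg W))
    -- the constants `E` and `H`
    (E H : ℝ)
    (hE : Integrable (fun ω => frobSq (G ω)) μ ∧ ∫ ω, frobSq (G ω) ∂μ ≤ E)
    (hH : frobNorm EG ≤ H) (hHt : frobNorm EGt ≤ H)
    -- constant learning rate
    (η : ℝ) (hη : 0 < η)
    (hdint : Integrable (fun ω => Metric.infDist (colAvg (W * A - η • G ω)) Wstar ^ 2) μ) :
    ∫ ω, Metric.infDist (colAvg (W * A - η • G ω)) Wstar ^ 2 ∂μ ≤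
      Metric.infDist (colAvg W) Wstar ^ 2
      + η ^ 2 * E / M
      + 4 * η * H / M * frobNorm (ctr W)
      - 2 * η / M * (F (colAvg W) - Fstar) := by
  simp only [colAvg_sub_smul, colAvg_mul_of_sum_row_eq_one _ hrows] at hdint ⊢
  have hM' : (0 : ℝ) < M := by exact_mod_cast hM
  have hnoise : η ^ 2 / M * ∫ ω, frobSq (G ω) ∂μ ≤ η ^ 2 * E / M := by
    rw [div_mul_eq_mul_div]; gcongr; exact hE.2
  suffices ∀ p ∈ Wstar, ∫ ω, Metric.infDist (colAvg W - η • colAvg (G ω)) Wstar ^ 2 ∂μ ≤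
      dist (colAvg W) p ^ 2 + (η ^ 2 * E / M + 4 * η * H / M * frobNorm (ctr W)
        - 2 * η / M * (F (colAvg W) - Fstar)) by
    linarith [le_sq_infDist_add hWne this]
  intro p hp
  have hstep := integral_sq_infDist_sub_smul_colAvg_le hp η hGint hEG hE.1 hdint
  have hdesc := sum_sub_le_mul_inner_colAvg hsub hsubt hH hHt p
  have hgap : F (colAvg W) - Fstar = ∑ j, Fj j (colAvg W) - ∑ j, Fj j p := by
    rw [← hFstar p hp, hFdef]
  have hdrift : 2 * η / M * (F (colAvg W) - Fstar) - 4 * η * H / M * frobNorm (ctr W) ≤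
      2 * η * inner ℝ (colAvg EG) (colAvg W - p) :=
    calc _ = 2 * η / M * (∑ j, Fj j (colAvg W) - ∑ j, Fj j p - 2 * H * frobNorm (ctr W)) := by
          rw [hgap]; ring
      _ ≤ 2 * η / M * (M * inner ℝ (colAvg EG) (colAvg W - p)) := by gcongr
      _ = 2 * η * inner ℝ (colAvg EG) (colAvg W - p) := by field_simp
  linarith

/-- **Lemma 2 (distance decrease).** One step of the decentralized update decreases the
expected squared distance of the average model to the set of minimizers. -/
theorem statement11
    (n M : ℕ) (hM : 0 < M)
    -- the consensus matrix: nonnegative, doubly stochastic (A4), normal (A4),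
    -- irreducible (strongly connected graph, A3) and primitive (positive diagonal)
    (A : Matrix (Fin M) (Fin M) ℝ)
    (hnonneg : ∀ i j, 0 ≤ A i j)
    (hrows : ∀ i, ∑ j, A i j = 1)
    (hcols : ∀ j, ∑ i, A i j = 1)
    (hnormal : Aᵀ * A = A * Aᵀ)
    (hirr : ∀ i j, ∃ k : ℕ, 0 < (A ^ k) i j)
    (hdiag : ∀ i, 0 < A i i)
    -- the local objective functions (A1), the global objective `F` and its
    -- nonempty set of global minimizers (A2), with minimum value `F*`
    (Fj : Fin M → EuclideanSpace ℝ (Fin n) → ℝ)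
    (hconv : ∀ j, ConvexOn ℝ Set.univ (Fj j))
    (F : EuclideanSpace ℝ (Fin n) → ℝ) (hFdef : F = fun w => ∑ j, Fj j w)
    (Wstar : Set (EuclideanSpace ℝ (Fin n))) (hWstar : Wstar = {w | ∀ v, F w ≤ F v})
    (hWne : Wstar.Nonempty)
    (Fstar : ℝ) (hFstar : ∀ w ∈ Wstar, F w = Fstar)
    -- probability space carrying the minibatch randomness of the current iteration
    {Ω : Type*} [m0 : MeasurableSpace Ω] (μ : Measure Ω) [IsProbabilityMeasure μ]
    -- current estimates `W = W(k)`, the random stochastic subgradient matrix `G = G(k)`,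
    -- and a random stochastic subgradient matrix `Gt` taken at the average model `w̄(k)`
    (W : Matrix (Fin n) (Fin M) ℝ)
    (G Gt : Ω → Matrix (Fin n) (Fin M) ℝ)
    (hGint : ∀ i j, Integrable (fun ω => G ω i j) μ)
    (hGtint : ∀ i j, Integrable (fun ω => Gt ω i j) μ)
    -- the expected stochastic subgradient matrices
    (EG EGt : Matrix (Fin n) (Fin M) ℝ)
    (hEG : ∀ i j, EG i j = ∫ ω, G ω i j ∂μ)
    (hEGt : ∀ i j, EGt i j = ∫ ω, Gt ω i j ∂μ)
    -- unbiasedness: the expected columns are subgradients at `wⱼ(k)` resp. at `w̄(k)`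
    (hsub : ∀ j, IsSubgradAt (Fj j) (col EG j) (col W j))
    (hsubt : ∀ j, IsSubgradAt (Fj j) (col EGt j) (colAvg W))
    -- the constants `E` and `H`
    (E H : ℝ)
    (hE : Integrable (fun ω => frobSq (G ω)) μ ∧ ∫ ω, frobSq (G ω) ∂μ ≤ E)
    (hH : frobNorm EG ≤ H) (hHt : frobNorm EGt ≤ H)
    -- constant learning rate
    (η : ℝ) (hη : 0 < η)
    (hdint : Integrable (fun ω => Metric.infDist (colAvg (W * A - η • G ω)) Wstar ^ 2) μ) :
    ∫ ω, Metric.infDist (colAvg (W * A - η • G ω)) Wstar ^ 2 ∂μ ≤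
      Metric.infDist (colAvg W) Wstar ^ 2
      + η ^ 2 * E / M
      + 4 * η * H / M * frobNorm (ctr W)
      - 2 * η / M * (F (colAvg W) - Fstar) :=
  statement11_general n M hM A hrows Fj F hFdef Wstar hWne Fstar hFstar (m0 := m0) μ W G hGint EG
    EGt hEG hsub hsubt E H hE hH hHt η hη hdint

end
end

section
/- Under the hypotheses of Corollary c:max_dist with constant learning rate η > 0, the time average of the expected consensus error satisfies, for every K ≥ 1: (1/K)·Σ_{k=0}^{K−1} E_ξ[ ||ΔW(k)||_F ] ≤ (√M·√R_sp/K)·(1−|λ2|^K)/(1−|λ2|) + η√E_sp·(1−α)·(K−1)/K + (η√E_sp·α/(1−|λ2|))·( 1 − (1/K)·(1−|λ2|^K)/(1−|λ2|) ). -/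
open MeasureTheory Matrix Finset

noncomputable section

/-! Unrolling the update gives `ΔW(k) = ΔW(0) Aᵏ - η ∑_{j<k} ΔG(j) A^{k-1-j}`, because right
multiplication by the doubly stochastic `A` commutes with centring. A centred matrix `B` is killed
by the consensus projector, so orthogonality of the spectral projectors gives
`‖B Aᵐ‖²_F = ∑_{q ≠ 0} |λ_q|^{2m} ‖B P_q‖²_F ≤ |λ₂|^{2m} ‖B‖²_F`; in expectation this bounds the
noise terms by `α² |λ₂|^{2m} E_sp` for `m ≥ 1` (and by `E_sp` for `m = 0`). Jensen's inequality
`E √X ≤ √(E X)` and the triangle inequality then bound `E ‖ΔW(k)‖_F` termwise, and summing the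
geometric series over `k` gives the time average (the factor `√M ≥ 1` is slack). -/

section Frobenius

variable {n M : ℕ}

lemma frobSq_nonneg (B : Matrix (Fin n) (Fin M) ℝ) : 0 ≤ frobSq B := by
  unfold frobSq; positivity

lemma frobSqC_nonneg (B : Matrix (Fin n) (Fin M) ℂ) : 0 ≤ frobSqC B := by
  unfold frobSqC; positivity

lemma frobSq_eq_frobSqC_map (B : Matrix (Fin n) (Fin M) ℝ) :
    frobSq B = frobSqC (B.map (fun x => (x : ℂ))) := by
  simp [frobSq, frobSqC, sq_abs]

lemma frobSqC_eq_re_trace (X : Matrix (Fin n) (Fin M) ℂ) :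
    frobSqC X = (Xᴴ * X).trace.re := by
  simp only [frobSqC, trace, diag_apply, mul_apply, conjTranspose_apply, Complex.re_sum]
  rw [Finset.sum_comm]
  refine Finset.sum_congr rfl fun i _ => Finset.sum_congr rfl fun j _ => ?_
  rw [RCLike.star_def, Complex.conj_mul', ← Complex.ofReal_pow, Complex.ofReal_re]

/-- Pythagoras: `tr (Xᴴ Y)` is the Frobenius inner product. -/
lemma frobSqC_sum_smul_of_trace_eq_zero {ι : Type*} (s : Finset ι) (c : ι → ℂ)
    (X : ι → Matrix (Fin n) (Fin M) ℂ)
    (horth : ∀ i ∈ s, ∀ j ∈ s, i ≠ j → ((X i)ᴴ * X j).trace = 0) :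
    frobSqC (∑ i ∈ s, c i • X i) = ∑ i ∈ s, ‖c i‖ ^ 2 * frobSqC (X i) := by
  have htrace : ((∑ i ∈ s, c i • X i)ᴴ * ∑ i ∈ s, c i • X i).trace
      = ∑ i ∈ s, ((‖c i‖ ^ 2 : ℝ) : ℂ) * ((X i)ᴴ * X i).trace := by
    simp only [conjTranspose_sum, conjTranspose_smul, Matrix.sum_mul, Matrix.mul_sum,
      Matrix.smul_mul, Matrix.mul_smul, trace_sum, trace_smul, smul_eq_mul]
    refine Finset.sum_congr rfl fun i hi => ?_
    rw [Finset.sum_eq_single_of_mem i hi fun j hj hji => by rw [horth j hj i hi hji, mul_zero],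
      RCLike.star_def, ← mul_assoc, Complex.mul_conj', Complex.ofReal_pow]
  rw [frobSqC_eq_re_trace, htrace, Complex.re_sum]
  simp only [Complex.re_ofReal_mul, ← frobSqC_eq_re_trace]

attribute [local instance] Matrix.frobeniusNormedAddCommGroup Matrix.frobeniusNormedSpace

lemma frobNorm_eq_norm (B : Matrix (Fin n) (Fin M) ℝ) : frobNorm B = ‖B‖ := by
  rw [frobNorm, frobSq, frobenius_norm_def, ← Real.sqrt_eq_rpow]
  simp [sq_abs]

lemma frobNorm_sub_smul_sum_le {ι : Type*} (X : Matrix (Fin n) (Fin M) ℝ) {c : ℝ}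
    (hc : 0 ≤ c) (s : Finset ι) (F : ι → Matrix (Fin n) (Fin M) ℝ) :
    frobNorm (X - c • ∑ i ∈ s, F i) ≤ frobNorm X + c * ∑ i ∈ s, frobNorm (F i) := by
  simp only [frobNorm_eq_norm]
  calc ‖X - c • ∑ i ∈ s, F i‖ ≤ ‖X‖ + ‖c • ∑ i ∈ s, F i‖ := norm_sub_le _ _
    _ ≤ ‖X‖ + c * ∑ i ∈ s, ‖F i‖ := by
      rw [norm_smul, Real.norm_of_nonneg hc]
      gcongr
      exact norm_sum_le _ _

end Frobenius

section Centering

variable {n M : ℕ}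

lemma sum_ctr_eq_zero (hM : M ≠ 0) (B : Matrix (Fin n) (Fin M) ℝ) (i : Fin n) :
    ∑ j, ctr B i j = 0 := by
  simp only [ctr, of_apply, Finset.sum_sub_distrib, Finset.sum_const, Finset.card_univ,
    Fintype.card_fin, nsmul_eq_mul]
  field_simp
  ring

lemma ctr_sub_smul (B C : Matrix (Fin n) (Fin M) ℝ) (c : ℝ) :
    ctr (B - c • C) = ctr B - c • ctr C := by
  ext i j
  simp only [ctr, of_apply, Matrix.sub_apply, Matrix.smul_apply, smul_eq_mul,
    Finset.sum_sub_distrib, ← Finset.mul_sum]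
  ring

lemma ctr_mul_of_doublyStochastic {A : Matrix (Fin M) (Fin M) ℝ}
    (hrows : ∀ i, ∑ j, A i j = 1) (hcols : ∀ j, ∑ i, A i j = 1)
    (B : Matrix (Fin n) (Fin M) ℝ) : ctr (B * A) = ctr B * A := by
  ext i j
  have hrow : ∑ j', ∑ k, B i k * A k j' = ∑ k, B i k := by
    rw [Finset.sum_comm]
    simp only [← Finset.mul_sum, hrows, mul_one]
  simp only [ctr, of_apply, mul_apply, hrow, sub_mul, Finset.sum_sub_distrib,
    ← Finset.mul_sum, hcols, mul_one]

lemma ctr_eq_of_update {A : Matrix (Fin M) (Fin M) ℝ}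
    (hrows : ∀ i, ∑ j, A i j = 1) (hcols : ∀ j, ∑ i, A i j = 1) {η : ℝ}
    {W G : ℕ → Matrix (Fin n) (Fin M) ℝ} (hupd : ∀ k, W (k + 1) = W k * A - η • G k) (k : ℕ) :
    ctr (W k) = ctr (W 0) * A ^ k - η • ∑ j ∈ Finset.range k, ctr (G j) * A ^ (k - 1 - j) := by
  induction k with
  | zero => simp
  | succ k ih =>
    have hpow : ∀ j ∈ Finset.range k, ctr (G j) * A ^ (k - 1 - j) * A = ctr (G j) * A ^ (k - j) :=
      fun j hj => by
        rw [Matrix.mul_assoc, ← pow_succ, show k - 1 - j + 1 = k - j by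
          have := Finset.mem_range.mp hj; omega]
    rw [hupd, ctr_sub_smul, ctr_mul_of_doublyStochastic hrows hcols, ih, Matrix.sub_mul,
      Matrix.smul_mul, Matrix.sum_mul, Finset.sum_congr rfl hpow, Matrix.mul_assoc, ← pow_succ,
      Finset.sum_range_succ, Nat.add_sub_cancel, Nat.sub_self, pow_zero, Matrix.mul_one,
      smul_add, sub_sub]

end Centering

lemma CompleteOrthogonalIdempotents.sum_smul_pow {R S ι : Type*} [Fintype ι] [Ring R]
    [CommRing S] [Algebra S R] {e : ι → R} (he : CompleteOrthogonalIdempotents e) (c : ι → S)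
    (k : ℕ) : (∑ i, c i • e i) ^ k = ∑ i, c i ^ k • e i := by
  induction k with
  | zero => simp [he.complete]
  | succ k ih =>
    rw [pow_succ, ih, Finset.sum_mul]
    refine Finset.sum_congr rfl fun i _ => ?_
    rw [Finset.mul_sum, Finset.sum_eq_single i
      (fun j _ hji => by rw [smul_mul_smul_comm, he.ortho hji.symm, smul_zero]) (by simp),
      smul_mul_smul_comm, (he.idem i).eq, pow_succ]

lemma map_ofReal_mul {l m n : ℕ} (B : Matrix (Fin l) (Fin m) ℝ) (C : Matrix (Fin m) (Fin n) ℝ) :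
    (B * C).map (fun x => (x : ℂ)) = B.map (fun x => (x : ℂ)) * C.map (fun x => (x : ℂ)) :=
  Matrix.map_mul (f := Complex.ofRealHom)

lemma map_ofReal_pow {M : ℕ} (A : Matrix (Fin M) (Fin M) ℝ) (k : ℕ) :
    (A ^ k).map (fun x => (x : ℂ)) = A.map (fun x => (x : ℂ)) ^ k :=
  map_pow Complex.ofRealHom.mapMatrix A k

/-- The paper's consensus projector `P_1 = 𝟙𝟙ᵀ/M` is `P 0` here. -/
structure IsSpectralDecomposition {M Q : ℕ} (A : Matrix (Fin M) (Fin M) ℝ) (lam : Fin Q → ℂ)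
    (P : Fin Q → Matrix (Fin M) (Fin M) ℂ) : Prop where
  map_ofReal_eq : A.map (fun x => (x : ℂ)) = ∑ q, lam q • P q
  completeOrthogonalIdempotents : CompleteOrthogonalIdempotents P
  conjTranspose_eq : ∀ q, (P q)ᴴ = P q
  eq_const_of_val_eq_zero : ∀ q : Fin Q, (q : ℕ) = 0 → P q = of fun _ _ => (M : ℂ)⁻¹

namespace IsSpectralDecomposition

variable {n M Q : ℕ} {A : Matrix (Fin M) (Fin M) ℝ} {lam : Fin Q → ℂ}
  {P : Fin Q → Matrix (Fin M) (Fin M) ℂ} {B : Matrix (Fin n) (Fin M) ℝ}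

lemma map_ofReal_mul_eq_zero (h : IsSpectralDecomposition A lam P) (hB : ∀ i, ∑ j, B i j = 0)
    {q : Fin Q} (hq : (q : ℕ) = 0) : B.map (fun x => (x : ℂ)) * P q = 0 := by
  ext i j
  simp [h.eq_const_of_val_eq_zero q hq, mul_apply, ← Finset.sum_mul, ← Complex.ofReal_sum, hB i]

lemma map_ofReal_mul_pow (h : IsSpectralDecomposition A lam P) (hB : ∀ i, ∑ j, B i j = 0)
    (k : ℕ) : (B * A ^ k).map (fun x => (x : ℂ)) =
      ∑ q ∈ Finset.univ.filter (fun q : Fin Q => (q : ℕ) ≠ 0),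
        lam q ^ k • (B.map (fun x => (x : ℂ)) * P q) := by
  rw [map_ofReal_mul, map_ofReal_pow, h.map_ofReal_eq,
    h.completeOrthogonalIdempotents.sum_smul_pow, Matrix.mul_sum, Finset.sum_filter]
  refine Finset.sum_congr rfl fun q _ => ?_
  split_ifs with hq
  · rw [Matrix.mul_smul]
  · rw [Matrix.mul_smul, h.map_ofReal_mul_eq_zero hB (not_not.mp hq), smul_zero]

lemma trace_mul_eq_zero (h : IsSpectralDecomposition A lam P) (X : Matrix (Fin n) (Fin M) ℂ)
    {q q' : Fin Q} (hqq' : q ≠ q') : ((X * P q)ᴴ * (X * P q')).trace = 0 := by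
  rw [conjTranspose_mul, h.conjTranspose_eq, Matrix.mul_assoc, trace_mul_comm, Matrix.mul_assoc,
    Matrix.mul_assoc X, h.completeOrthogonalIdempotents.ortho hqq'.symm, Matrix.mul_zero,
    Matrix.mul_zero, trace_zero]

lemma frobSq_mul_pow (h : IsSpectralDecomposition A lam P) (hB : ∀ i, ∑ j, B i j = 0) (k : ℕ) :
    frobSq (B * A ^ k) = ∑ q ∈ Finset.univ.filter (fun q : Fin Q => (q : ℕ) ≠ 0),
      (‖lam q‖ ^ k) ^ 2 * frobSqC (B.map (fun x => (x : ℂ)) * P q) := by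
  rw [frobSq_eq_frobSqC_map, h.map_ofReal_mul_pow hB,
    frobSqC_sum_smul_of_trace_eq_zero _ _ _ fun q _ q' _ hqq' => h.trace_mul_eq_zero _ hqq']
  simp only [norm_pow]

lemma frobSq_mul_pow_le (h : IsSpectralDecomposition A lam P) (hB : ∀ i, ∑ j, B i j = 0)
    {ρ : ℝ} (hle : ∀ q : Fin Q, (q : ℕ) ≠ 0 → ‖lam q‖ ≤ ρ) (k : ℕ) :
    frobSq (B * A ^ k) ≤ (ρ ^ k) ^ 2 * frobSq B := by
  have hB' := h.frobSq_mul_pow hB 0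
  simp only [pow_zero, Matrix.mul_one, one_pow, one_mul] at hB'
  rw [h.frobSq_mul_pow hB, hB', Finset.mul_sum]
  gcongr with q hq
  · exact frobSqC_nonneg _
  · exact hle q (Finset.mem_filter.mp hq).2

end IsSpectralDecomposition

/-- The paper's `α`, for `r q = |λ_q|` and `ρ = |λ₂|`. -/
def energyCoeff {ι : Type*} (s : Finset ι) (e r : ι → ℝ) (ρ : ℝ) : ℝ :=
  if ρ ≠ 0 then √(∑ i ∈ s, e i * (r i / ρ) ^ 2) else 1

lemma energyCoeff_nonneg {ι : Type*} (s : Finset ι) (e r : ι → ℝ) (ρ : ℝ) :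
    0 ≤ energyCoeff s e r ρ := by
  unfold energyCoeff
  split_ifs <;> positivity

lemma sum_mul_sq_le_energyCoeff_mul_sq {ι : Type*} (s : Finset ι) (e r : ι → ℝ) {ρ : ℝ}
    (hr : ∀ i ∈ s, 0 ≤ r i ∧ r i ≤ ρ) :
    ∑ i ∈ s, e i * r i ^ 2 ≤ (energyCoeff s e r ρ * ρ) ^ 2 := by
  unfold energyCoeff
  split_ifs with hρ
  · rw [mul_pow, Real.sq_sqrt']
    calc ∑ i ∈ s, e i * r i ^ 2 = ∑ i ∈ s, e i * (r i / ρ) ^ 2 * ρ ^ 2 :=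
          Finset.sum_congr rfl fun i _ => by field_simp
      _ ≤ max (∑ i ∈ s, e i * (r i / ρ) ^ 2) 0 * ρ ^ 2 := by
          rw [← Finset.sum_mul]
          gcongr
          exact le_max_left _ _
  · have hr0 : ∀ i ∈ s, r i = 0 := fun i hi => by
      have := hr i hi
      rw [not_not.mp hρ] at this
      exact le_antisymm this.2 this.1
    rw [Finset.sum_eq_zero fun i hi => by rw [hr0 i hi]; ring]
    positivity

/-- `√E_sp * noiseWeight α |λ₂| m` bounds `E ‖ΔG(k) Aᵐ‖_F`. -/
def noiseWeight (α ρ : ℝ) : ℕ → ℝ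
  | 0 => 1
  | m + 1 => α * ρ ^ (m + 1)

lemma sum_range_succ_noiseWeight (α ρ : ℝ) (k : ℕ) :
    ∑ m ∈ Finset.range (k + 1), noiseWeight α ρ m
      = 1 - α + α * ∑ m ∈ Finset.range (k + 1), ρ ^ m := by
  rw [Finset.sum_range_succ', Finset.sum_range_succ' (ρ ^ ·), mul_add, Finset.mul_sum]
  simp only [noiseWeight]
  ring

lemma sum_range_sum_range_noiseWeight (α : ℝ) {ρ : ℝ} (hρ : ρ ≠ 1) (K : ℕ) :
    ∑ k ∈ Finset.range (K + 1), ∑ m ∈ Finset.range k, noiseWeight α ρ m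
      = (1 - α) * K + α / (1 - ρ) * (K + 1 - (1 - ρ ^ (K + 1)) / (1 - ρ)) := by
  have h1ρ : 1 - ρ ≠ 0 := sub_ne_zero.mpr hρ.symm
  induction K with
  | zero => simp [div_self h1ρ]
  | succ K ih =>
    rw [Finset.sum_range_succ, ih, sum_range_succ_noiseWeight, geom_sum_eq hρ]
    push_cast
    field_simp
    ring

lemma average_le_of_le_noiseWeight {a : ℕ → ℝ} {R E η α ρ : ℝ} (hρ : ρ ≠ 1)
    (ha : ∀ k, a k ≤ R * ρ ^ k + η * ∑ m ∈ Finset.range k, E * noiseWeight α ρ m)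
    {K : ℕ} (hK : 1 ≤ K) :
    (1 / (K : ℝ)) * ∑ k ∈ Finset.range K, a k ≤
      R / K * ((1 - ρ ^ K) / (1 - ρ)) + η * E * (1 - α) * (((K : ℝ) - 1) / K)
        + (η * E * α / (1 - ρ)) * (1 - (1 / (K : ℝ)) * ((1 - ρ ^ K) / (1 - ρ))) := by
  obtain ⟨K, rfl⟩ : ∃ K', K = K' + 1 := ⟨K - 1, by omega⟩
  have hgeom : ∑ k ∈ Finset.range (K + 1), ρ ^ k = (1 - ρ ^ (K + 1)) / (1 - ρ) := by
    rw [geom_sum_eq hρ, ← neg_div_neg_eq, neg_sub, neg_sub]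
  calc (1 / ((K + 1 : ℕ) : ℝ)) * ∑ k ∈ Finset.range (K + 1), a k
      ≤ (1 / ((K + 1 : ℕ) : ℝ)) * ∑ k ∈ Finset.range (K + 1),
          (R * ρ ^ k + η * ∑ m ∈ Finset.range k, E * noiseWeight α ρ m) := by
        gcongr with k
        exact ha k
    _ = _ := by
        simp only [Finset.sum_add_distrib, ← Finset.mul_sum, hgeom,
          sum_range_sum_range_noiseWeight α hρ K]
        push_cast
        field_simp
        ring

section Expectation

variable {Ω : Type*} [MeasurableSpace Ω] {μ : Measure Ω}

lemma integrable_sqrt_of_nonneg [IsFiniteMeasure μ] {f : Ω → ℝ} (hf : Integrable f μ)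
    (hf0 : ∀ ω, 0 ≤ f ω) : Integrable (fun ω => √(f ω)) μ := by
  have hm := Real.continuous_sqrt.comp_aestronglyMeasurable hf.aestronglyMeasurable
  refine ((memLp_two_iff_integrable_sq hm).2 ?_).integrable one_le_two
  simpa only [Function.comp_apply, Real.sq_sqrt (hf0 _)] using hf

lemma integral_sqrt_le_sqrt_integral [IsProbabilityMeasure μ] {f : Ω → ℝ} (hf : Integrable f μ)
    (hf0 : ∀ ω, 0 ≤ f ω) : ∫ ω, √(f ω) ∂μ ≤ √(∫ ω, f ω ∂μ) :=
  Real.strictConcaveOn_sqrt.concaveOn.le_map_integral Real.continuous_sqrt.continuousOn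
    isClosed_Ici (ae_of_all _ hf0) hf (integrable_sqrt_of_nonneg hf hf0)

end Expectation

namespace IsSpectralDecomposition

variable {Ω : Type*} [MeasurableSpace Ω] {μ : Measure Ω} {n M Q : ℕ}
  {A : Matrix (Fin M) (Fin M) ℝ} {lam : Fin Q → ℂ} {P : Fin Q → Matrix (Fin M) (Fin M) ℂ}
  {Γ : Ω → Matrix (Fin n) (Fin M) ℝ}

lemma integrable_frobSq_ctr_mul_pow (h : IsSpectralDecomposition A lam P) (hM : M ≠ 0)
    (hint : ∀ q : Fin Q, (q : ℕ) ≠ 0 →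
      Integrable (fun ω => frobSqC ((ctr (Γ ω)).map (fun x => (x : ℂ)) * P q)) μ) (k : ℕ) :
    Integrable (fun ω => frobSq (ctr (Γ ω) * A ^ k)) μ := by
  simp only [h.frobSq_mul_pow (sum_ctr_eq_zero hM _)]
  exact integrable_finsetSum _ fun q hq => (hint q (Finset.mem_filter.mp hq).2).const_mul _

lemma integral_frobSq_ctr_mul_pow_succ_le (h : IsSpectralDecomposition A lam P) (hM : M ≠ 0)
    {ρ : ℝ} (hle : ∀ q : Fin Q, (q : ℕ) ≠ 0 → ‖lam q‖ ≤ ρ) {e : Fin Q → ℝ} {Esp : ℝ}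
    (hEsp : 0 ≤ Esp)
    (he : ∀ q : Fin Q, (q : ℕ) ≠ 0 →
      Integrable (fun ω => frobSqC ((ctr (Γ ω)).map (fun x => (x : ℂ)) * P q)) μ ∧
      ∫ ω, frobSqC ((ctr (Γ ω)).map (fun x => (x : ℂ)) * P q) ∂μ ≤ e q * Esp) (k : ℕ) :
    ∫ ω, frobSq (ctr (Γ ω) * A ^ (k + 1)) ∂μ ≤
      (energyCoeff (Finset.univ.filter (fun q : Fin Q => (q : ℕ) ≠ 0)) e (‖lam ·‖) ρ
        * ρ ^ (k + 1)) ^ 2 * Esp := by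
  set S := Finset.univ.filter (fun q : Fin Q => (q : ℕ) ≠ 0)
  have hS : ∀ q ∈ S, (q : ℕ) ≠ 0 := fun q hq => (Finset.mem_filter.mp hq).2
  simp only [h.frobSq_mul_pow (sum_ctr_eq_zero hM _)]
  rw [integral_finsetSum _ fun q hq => ((he q (hS q hq)).1.const_mul _)]
  calc ∑ q ∈ S, ∫ ω, (‖lam q‖ ^ (k + 1)) ^ 2 *
          frobSqC ((ctr (Γ ω)).map (fun x => (x : ℂ)) * P q) ∂μ
      ≤ ∑ q ∈ S, (ρ ^ k) ^ 2 * Esp * (e q * ‖lam q‖ ^ 2) := by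
        refine Finset.sum_le_sum fun q hq => ?_
        have hI : 0 ≤ ∫ ω, frobSqC ((ctr (Γ ω)).map (fun x => (x : ℂ)) * P q) ∂μ :=
          integral_nonneg fun ω => frobSqC_nonneg _
        rw [integral_const_mul]
        calc (‖lam q‖ ^ (k + 1)) ^ 2 * ∫ ω, frobSqC ((ctr (Γ ω)).map (fun x => (x : ℂ)) * P q) ∂μ
            = (‖lam q‖ ^ k) ^ 2 * ‖lam q‖ ^ 2 *
                ∫ ω, frobSqC ((ctr (Γ ω)).map (fun x => (x : ℂ)) * P q) ∂μ := by ring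
          _ ≤ (ρ ^ k) ^ 2 * ‖lam q‖ ^ 2 * (e q * Esp) := by
            gcongr
            · exact hle q (hS q hq)
            · exact (he q (hS q hq)).2
          _ = (ρ ^ k) ^ 2 * Esp * (e q * ‖lam q‖ ^ 2) := by ring
    _ = (ρ ^ k) ^ 2 * Esp * ∑ q ∈ S, e q * ‖lam q‖ ^ 2 := by rw [Finset.mul_sum]
    _ ≤ (ρ ^ k) ^ 2 * Esp * (energyCoeff S e (‖lam ·‖) ρ * ρ) ^ 2 := by
        gcongr
        exact sum_mul_sq_le_energyCoeff_mul_sq S e _ fun q hq => ⟨norm_nonneg _, hle q (hS q hq)⟩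
    _ = (energyCoeff S e (‖lam ·‖) ρ * ρ ^ (k + 1)) ^ 2 * Esp := by ring

lemma integral_frobNorm_ctr_mul_pow_le [IsProbabilityMeasure μ]
    (h : IsSpectralDecomposition A lam P) (hM : M ≠ 0) {ρ : ℝ} (hρ : 0 ≤ ρ)
    (hle : ∀ q : Fin Q, (q : ℕ) ≠ 0 → ‖lam q‖ ≤ ρ) {e : Fin Q → ℝ} {Esp : ℝ}
    (hEsp : ∫ ω, frobSq (ctr (Γ ω)) ∂μ ≤ Esp)
    (he : ∀ q : Fin Q, (q : ℕ) ≠ 0 →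
      Integrable (fun ω => frobSqC ((ctr (Γ ω)).map (fun x => (x : ℂ)) * P q)) μ ∧
      ∫ ω, frobSqC ((ctr (Γ ω)).map (fun x => (x : ℂ)) * P q) ∂μ ≤ e q * Esp) (k : ℕ) :
    ∫ ω, frobNorm (ctr (Γ ω) * A ^ k) ∂μ ≤ √Esp *
      noiseWeight (energyCoeff (Finset.univ.filter (fun q : Fin Q => (q : ℕ) ≠ 0)) e (‖lam ·‖) ρ)
        ρ k := by
  refine (integral_sqrt_le_sqrt_integral
    (h.integrable_frobSq_ctr_mul_pow hM (fun q hq => (he q hq).1) k)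
    (fun ω => frobSq_nonneg _)).trans ?_
  cases k with
  | zero => simpa [noiseWeight] using Real.sqrt_le_sqrt hEsp
  | succ k =>
    have hEsp0 : 0 ≤ Esp := (integral_nonneg fun ω => frobSq_nonneg _).trans hEsp
    refine (Real.sqrt_le_sqrt (h.integral_frobSq_ctr_mul_pow_succ_le hM hle hEsp0 he k)).trans_eq ?_
    rw [Real.sqrt_mul (sq_nonneg _),
      Real.sqrt_sq (mul_nonneg (energyCoeff_nonneg _ _ _ _) (pow_nonneg hρ _)), mul_comm,
      noiseWeight]

end IsSpectralDecomposition

lemma integral_frobNorm_ctr_le {Ω : Type*} [MeasurableSpace Ω] {μ : Measure Ω}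
    [IsProbabilityMeasure μ] {n M : ℕ} {A : Matrix (Fin M) (Fin M) ℝ}
    (hrows : ∀ i, ∑ j, A i j = 1) (hcols : ∀ j, ∑ i, A i j = 1) {η : ℝ} (hη : 0 ≤ η)
    {W G : ℕ → Ω → Matrix (Fin n) (Fin M) ℝ} {W0 : Matrix (Fin n) (Fin M) ℝ}
    (hW0 : ∀ ω, W 0 ω = W0) (hupd : ∀ k ω, W (k + 1) ω = W k ω * A - η • G k ω) {c : ℕ → ℝ}
    (hGint : ∀ j m, Integrable (fun ω => frobNorm (ctr (G j ω) * A ^ m)) μ)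
    (hG : ∀ j m, ∫ ω, frobNorm (ctr (G j ω) * A ^ m) ∂μ ≤ c m) (k : ℕ) :
    ∫ ω, frobNorm (ctr (W k ω)) ∂μ ≤ frobNorm (ctr W0 * A ^ k) + η * ∑ m ∈ Finset.range k, c m := by
  have hpath : ∀ ω, frobNorm (ctr (W k ω)) ≤ frobNorm (ctr W0 * A ^ k)
      + η * ∑ j ∈ Finset.range k, frobNorm (ctr (G j ω) * A ^ (k - 1 - j)) := fun ω => by
    rw [ctr_eq_of_update hrows hcols (W := (W · ω)) (fun k => hupd k ω) k, hW0]
    exact frobNorm_sub_smul_sum_le _ hη _ _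
  have hint : Integrable
      (fun ω => ∑ j ∈ Finset.range k, frobNorm (ctr (G j ω) * A ^ (k - 1 - j))) μ :=
    integrable_finsetSum _ fun j _ => hGint j _
  calc ∫ ω, frobNorm (ctr (W k ω)) ∂μ
      ≤ ∫ ω, (frobNorm (ctr W0 * A ^ k)
          + η * ∑ j ∈ Finset.range k, frobNorm (ctr (G j ω) * A ^ (k - 1 - j))) ∂μ :=
        integral_mono_of_nonneg (ae_of_all _ fun _ => Real.sqrt_nonneg _)
          ((integrable_const _).add (hint.const_mul η)) (ae_of_all _ hpath)
    _ = frobNorm (ctr W0 * A ^ k)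
          + η * ∑ j ∈ Finset.range k, ∫ ω, frobNorm (ctr (G j ω) * A ^ (k - 1 - j)) ∂μ := by
        rw [integral_add (integrable_const _) (hint.const_mul η), integral_const,
          integral_const_mul, integral_finsetSum _ fun j _ => hGint j _, probReal_univ, one_smul]
    _ ≤ frobNorm (ctr W0 * A ^ k) + η * ∑ j ∈ Finset.range k, c (k - 1 - j) := by
        gcongr with j
        exact hG j _
    _ = frobNorm (ctr W0 * A ^ k) + η * ∑ m ∈ Finset.range k, c m := by
        rw [Finset.sum_range_reflect]

theorem statement13_general
    (n M Q : ℕ) (hM : 0 < M) (hQ : 1 < Q)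
    -- the consensus matrix: nonnegative, doubly stochastic (A4), normal (A4),
    -- irreducible (strongly connected graph, A3) and primitive (positive diagonal)
    (A : Matrix (Fin M) (Fin M) ℝ)
    (hrows : ∀ i, ∑ j, A i j = 1)
    (hcols : ∀ j, ∑ i, A i j = 1)
    -- spectral decomposition of `A` into orthogonal projectors onto its `Q` distinct
    -- eigenspaces, with eigenvalues ordered by decreasing modulus, `λ₁ = 1 > |λ₂|`
    (lam : Fin Q → ℂ) (P : Fin Q → Matrix (Fin M) (Fin M) ℂ)
    (hdecomp : A.map (fun x => (x : ℂ)) = ∑ q, lam q • P q)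
    (hherm : ∀ q, (P q)ᴴ = P q)
    (hidem : ∀ q, P q * P q = P q)
    (horth : ∀ q q', q ≠ q' → P q * P q' = 0)
    (hPsum : ∑ q, P q = 1)
    (hord : ∀ q q' : Fin Q, q ≤ q' → ‖lam q'‖ ≤ ‖lam q‖)
    (hP1 : ∀ q : Fin Q, (q : ℕ) = 0 → P q = Matrix.of fun _ _ => (M : ℂ)⁻¹)
    (lam2 : ℝ) (hlam2 : lam2 = ‖lam ⟨1, hQ⟩‖) (hlam2lt : lam2 < 1)
    -- probability space carrying the minibatch randomness, the random iterates `W k`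
    -- and the random stochastic subgradient matrices `G k`
    {Ω : Type*} [m0 : MeasurableSpace Ω] (μ : Measure Ω) [IsProbabilityMeasure μ]
    (W G : ℕ → Ω → Matrix (Fin n) (Fin M) ℝ)
    -- constant learning rate and the decentralized update, with deterministic
    -- initialization `W0`
    (η : ℝ) (hη : 0 < η)
    (W0 : Matrix (Fin n) (Fin M) ℝ) (hW0 : ∀ ω, W 0 ω = W0)
    (hupd : ∀ k ω, W (k + 1) ω = W k ω * A - η • G k ω)
    -- the energy constants `R_sp` and `E_sp`
    (Rsp Esp : ℝ) (hRsp : frobSq (ctr W0) ≤ Rsp)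
    (hEsp : ∀ k, Integrable (fun ω => frobSq (ctr (G k ω))) μ ∧
      ∫ ω, frobSq (ctr (G k ω)) ∂μ ≤ Esp)
    -- bounds `e q` on the normalized fractions of energy of `ΔG(k)` in the eigenspaces,
    -- and the effective energy coefficient `α`
    (e : Fin Q → ℝ)
    (he : ∀ k, ∀ q : Fin Q, (q : ℕ) ≠ 0 →
      Integrable (fun ω => frobSqC ((ctr (G k ω)).map (fun x => (x : ℂ)) * P q)) μ ∧
      ∫ ω, frobSqC ((ctr (G k ω)).map (fun x => (x : ℂ)) * P q) ∂μ ≤ e q * Esp)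
    (α : ℝ)
    (hα : α = if lam2 ≠ 0 then
        Real.sqrt (∑ q ∈ Finset.univ.filter (fun q : Fin Q => (q : ℕ) ≠ 0),
          e q * (‖lam q‖ / lam2) ^ 2)
      else 1)
 :
    ∀ K : ℕ, 1 ≤ K →
      (1 / (K : ℝ)) * ∑ k ∈ Finset.range K, ∫ ω, frobNorm (ctr (W k ω)) ∂μ ≤
        (Real.sqrt M * Real.sqrt Rsp / K) * ((1 - lam2 ^ K) / (1 - lam2))
        + η * Real.sqrt Esp * (1 - α) * (((K : ℝ) - 1) / K)
        + (η * Real.sqrt Esp * α / (1 - lam2)) *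
            (1 - (1 / (K : ℝ)) * ((1 - lam2 ^ K) / (1 - lam2))) := by
  intro K hK
  have hspec : IsSpectralDecomposition A lam P :=
    ⟨hdecomp, ⟨⟨hidem, fun q q' hqq' => horth q q' hqq'⟩, hPsum⟩, hherm, hP1⟩
  have hρ : 0 ≤ lam2 := hlam2 ▸ norm_nonneg _
  have hle : ∀ q : Fin Q, (q : ℕ) ≠ 0 → ‖lam q‖ ≤ lam2 := fun q hq =>
    hlam2 ▸ hord _ _ (Fin.le_def.mpr (Nat.one_le_iff_ne_zero.mpr hq))
  have hα' : α = energyCoeff _ e (‖lam ·‖) lam2 := hα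
  have hinit : ∀ k, frobNorm (ctr W0 * A ^ k) ≤ √Rsp * lam2 ^ k := fun k => by
    refine (Real.sqrt_le_sqrt ((hspec.frobSq_mul_pow_le (sum_ctr_eq_zero hM.ne' W0) hle k).trans
      (mul_le_mul_of_nonneg_left hRsp (sq_nonneg _)))).trans_eq ?_
    rw [Real.sqrt_mul (sq_nonneg _), Real.sqrt_sq (pow_nonneg hρ _), mul_comm]
  have hstep : ∀ k, ∫ ω, frobNorm (ctr (W k ω)) ∂μ ≤
      √Rsp * lam2 ^ k + η * ∑ m ∈ Finset.range k, √Esp * noiseWeight α lam2 m := fun k => by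
    refine (integral_frobNorm_ctr_le hrows hcols hη.le hW0 hupd (fun j m => ?_) (fun j m => ?_)
      k).trans (by gcongr; exact hinit k)
    · exact integrable_sqrt_of_nonneg (hspec.integrable_frobSq_ctr_mul_pow hM.ne'
        (fun q hq => (he j q hq).1) m) fun ω => frobSq_nonneg _
    · exact hα' ▸ hspec.integral_frobNorm_ctr_mul_pow_le hM.ne' hρ hle (hEsp j).2 (he j) m
  have hgeom0 : 0 ≤ (1 - lam2 ^ K) / (1 - lam2) :=
    div_nonneg (sub_nonneg.mpr (pow_le_one₀ hρ hlam2lt.le)) (sub_nonneg.mpr hlam2lt.le)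
  refine (average_le_of_le_noiseWeight hlam2lt.ne hstep hK).trans ?_
  gcongr
  exact le_mul_of_one_le_left (Real.sqrt_nonneg _) (Real.one_le_sqrt.mpr (by exact_mod_cast hM))

/-- **Time-averaged consensus error.** Under the hypotheses of Corollary 2 with a constant
learning rate `η > 0`, the time average of the expected consensus error satisfies, for every
`K ≥ 1`, the stated bound. -/
theorem statement13
    (n M Q : ℕ) (hM : 0 < M) (hQ : 1 < Q)
    -- the consensus matrix: nonnegative, doubly stochastic (A4), normal (A4),
    -- irreducible (strongly connected graph, A3) and primitive (positive diagonal)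
    (A : Matrix (Fin M) (Fin M) ℝ)
    (hnonneg : ∀ i j, 0 ≤ A i j)
    (hrows : ∀ i, ∑ j, A i j = 1)
    (hcols : ∀ j, ∑ i, A i j = 1)
    (hnormal : Aᵀ * A = A * Aᵀ)
    (hirr : ∀ i j, ∃ k : ℕ, 0 < (A ^ k) i j)
    (hdiag : ∀ i, 0 < A i i)
    -- spectral decomposition of `A` into orthogonal projectors onto its `Q` distinct
    -- eigenspaces, with eigenvalues ordered by decreasing modulus, `λ₁ = 1 > |λ₂|`
    (lam : Fin Q → ℂ) (P : Fin Q → Matrix (Fin M) (Fin M) ℂ)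
    (hdecomp : A.map (fun x => (x : ℂ)) = ∑ q, lam q • P q)
    (hinj : Function.Injective lam)
    (hherm : ∀ q, (P q)ᴴ = P q)
    (hidem : ∀ q, P q * P q = P q)
    (horth : ∀ q q', q ≠ q' → P q * P q' = 0)
    (hPsum : ∑ q, P q = 1)
    (hord : ∀ q q' : Fin Q, q ≤ q' → ‖lam q'‖ ≤ ‖lam q‖)
    (hlam1 : ∀ q : Fin Q, (q : ℕ) = 0 → lam q = 1)
    (hP1 : ∀ q : Fin Q, (q : ℕ) = 0 → P q = Matrix.of fun _ _ => (M : ℂ)⁻¹)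
    (lam2 : ℝ) (hlam2 : lam2 = ‖lam ⟨1, hQ⟩‖) (hlam2lt : lam2 < 1)
    -- probability space carrying the minibatch randomness, the random iterates `W k`
    -- and the random stochastic subgradient matrices `G k`
    {Ω : Type*} [m0 : MeasurableSpace Ω] (μ : Measure Ω) [IsProbabilityMeasure μ]
    (W G : ℕ → Ω → Matrix (Fin n) (Fin M) ℝ)
    (hGmeas : ∀ k i j, Measurable fun ω => G k ω i j)
    -- constant learning rate and the decentralized update, with deterministic
    -- initialization `W0`
    (η : ℝ) (hη : 0 < η)
    (W0 : Matrix (Fin n) (Fin M) ℝ) (hW0 : ∀ ω, W 0 ω = W0)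
    (hupd : ∀ k ω, W (k + 1) ω = W k ω * A - η • G k ω)
    -- the energy constants `R_sp` and `E_sp`
    (Rsp Esp : ℝ) (hRsp : frobSq (ctr W0) ≤ Rsp)
    (hEsp : ∀ k, Integrable (fun ω => frobSq (ctr (G k ω))) μ ∧
      ∫ ω, frobSq (ctr (G k ω)) ∂μ ≤ Esp)
    -- bounds `e q` on the normalized fractions of energy of `ΔG(k)` in the eigenspaces,
    -- and the effective energy coefficient `α`
    (e : Fin Q → ℝ)
    (hesum : ∑ q ∈ Finset.univ.filter (fun q : Fin Q => (q : ℕ) ≠ 0), e q = 1)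
    (he : ∀ k, ∀ q : Fin Q, (q : ℕ) ≠ 0 →
      Integrable (fun ω => frobSqC ((ctr (G k ω)).map (fun x => (x : ℂ)) * P q)) μ ∧
      ∫ ω, frobSqC ((ctr (G k ω)).map (fun x => (x : ℂ)) * P q) ∂μ ≤ e q * Esp)
    (α : ℝ)
    (hα : α = if lam2 ≠ 0 then
        Real.sqrt (∑ q ∈ Finset.univ.filter (fun q : Fin Q => (q : ℕ) ≠ 0),
          e q * (‖lam q‖ / lam2) ^ 2)
      else 1)
    (hWint : ∀ k, Integrable (fun ω => frobNorm (ctr (W k ω))) μ)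
 :
    ∀ K : ℕ, 1 ≤ K →
      (1 / (K : ℝ)) * ∑ k ∈ Finset.range K, ∫ ω, frobNorm (ctr (W k ω)) ∂μ ≤
        (Real.sqrt M * Real.sqrt Rsp / K) * ((1 - lam2 ^ K) / (1 - lam2))
        + η * Real.sqrt Esp * (1 - α) * (((K : ℝ) - 1) / K)
        + (η * Real.sqrt Esp * α / (1 - lam2)) *
            (1 - (1 / (K : ℝ)) * ((1 - lam2 ^ K) / (1 - lam2))) :=
  statement13_general n M Q hM hQ A hrows hcols lam P hdecomp hherm hidem horth hPsum hord hP1 lam2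
    hlam2 hlam2lt (m0 := m0) μ W G η hη W0 hW0 hupd Rsp Esp hRsp hEsp e he α hα
end
end
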